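/- Let p ≥ 0, e ∈ Fin(p+1), let F be a nonempty finite set of subsets of Fin(p+1) each containing e, and for j ∈ {0, …, p} set F_j = F ∪ { T ⊆ Fin(p+1) : e ∈ T and |T| = j+1 }. Then for every j with 1 ≤ j ≤ p, the inclusion of subcomplexes ⨆_{T ∈ F_{j-1}} Face(T) ⟶ ⨆_{T ∈ F_j} Face(T) of Δ[p] has the left lifting property with respect to all Kan fibrations. -/

import Mathlib

open CategoryTheory Simplicial CategoryTheory.GrothendieckTopology

universe u

/-- A morphism of simplicial sets is a *Kan fibration* if it has the right lifting
property with respect to every horn inclusion `Λ[n, i] ⟶ Δ[n]` with `n ≥ 1`. -/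
def IsKanFibration {X Y : SSet} (f : X ⟶ Y) : Prop :=
  ∀ ⦃n : ℕ⦄ (i : Fin (n + 2)), HasLiftingProperty (SSet.horn (n + 1) i).ι f

namespace CategoryTheory.GrothendieckTopology.Subpresheaf

variable {C : Type*} [Category C] {F : Cᵒᵖ ⥤ Type u}

instance : InfSet (Subfunctor F) where
  sInf S :=
    { obj := fun U => ⋂ G ∈ S, Subfunctor.obj G U
      map := by
        intro U V i x hx
        simp only [Set.mem_iInter, Set.mem_preimage] at hx ⊢
        intro G hG
        exact G.map i (hx G hG) }

theorem sInf_obj (S : Set (Subfunctor F)) (U : Cᵒᵖ) :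
    (sInf S).obj U = ⋂ G ∈ S, Subfunctor.obj G U := rfl

/-- Subpresheaves of a presheaf of types form a complete lattice under objectwise
inclusion, with intersections (and hence unions) computed objectwise. -/
noncomputable instance : CompleteLattice (Subfunctor F) :=
  completeLatticeOfInf _ (fun S =>
    ⟨fun G hG U x hx => by
        rw [sInf_obj] at hx
        exact Set.mem_iInter₂.1 hx G hG,
     fun G hG U x hx => by
        rw [sInf_obj]
        exact Set.mem_iInter₂.2 fun H hH => hG hH U hx⟩)

end CategoryTheory.GrothendieckTopology.Subpresheaf

namespace CategoryTheory.GrothendieckTopology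

/-- A subpresheaf of a simplicial set, regarded as a simplicial set. -/
def Subpresheaf.sset {F : SSet} (G : Subfunctor F) : SSet := G.toFunctor

/-- The inclusion morphism of a subpresheaf of a simplicial set. -/
def Subpresheaf.ssetι {F : SSet} (G : Subfunctor F) : Subpresheaf.sset G ⟶ F := G.ι

/-- The inclusion morphism between two nested subpresheaves of a simplicial set. -/
def Subpresheaf.ssetHomOfLe {F : SSet} {G G' : Subfunctor F} (h : G ≤ G') :
    Subpresheaf.sset G ⟶ Subpresheaf.sset G' := Subfunctor.homOfLe h

end CategoryTheory.GrothendieckTopology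

/-- `SSet.face p S` is the face of the standard simplex `Δ[p]` spanned by the set of
vertices `S ⊆ Fin (p+1)` : the subpresheaf whose simplices are the monotone maps with
image (range) contained in `S`. -/
def SSet.face (p : ℕ) (S : Set (Fin (p + 1))) : Subfunctor (Δ[p] : SSet) where
  obj m := { α | Set.range (SSet.stdSimplex.asOrderHom α) ⊆ S }
  map := by
    intro U V i x hx y hy
    apply hx
    obtain ⟨z, rfl⟩ := hy
    exact ⟨i.unop.toOrderHom z, rfl⟩

/-!
Let `N` be the set of `T ∋ e` with `|T| = j + 1` contained in no member of `F`. The larger union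
is the smaller one with the faces `T ∈ N` glued on one at a time. For `a ≠ e` the face `T \ {a}`
belongs to `F_{j-1}`, while `T \ {e}` lies in no member of `F_{j-1}` and in no other member of `N`.
So each `T` meets what has been built so far exactly in its horn at `e`, every step is a pushout of
a horn inclusion `Λ[j, k] ⟶ Δ[j]`, and anodyne extensions lift against Kan fibrations.
-/

open MorphismProperty

theorem IsKanFibration.rlp_J {X Y : SSet} {g : X ⟶ Y} (hg : IsKanFibration g) :
    SSet.modelCategoryQuillen.J.rlp g := by
  intro _ _ i hi
  simp only [SSet.modelCategoryQuillen.J, iSup_iff] at hi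
  obtain ⟨n, ⟨k⟩⟩ := hi
  exact hg k

namespace SSet

section

-- The definitions above put a second complete lattice structure (with the same order) on
-- subfunctors; Mathlib's lemmas on subcomplexes are about its own one.
attribute [local instance high] CategoryTheory.instCompleteLatticeSubfunctor

namespace Subcomplex

variable {X Y : SSet.{u}}

lemma ofSimplex_le_iSup_iff {ι : Sort*} {n : ℕ} (x : X _⦋n⦌) (G : ι → X.Subcomplex) :
    ofSimplex x ≤ ⨆ i, G i ↔ ∃ i, ofSimplex x ≤ G i := by
  simp only [ofSimplex_le_iff, Subfunctor.iSup_obj, Set.mem_iUnion]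

lemma ofSimplex_le_sup_iff {n : ℕ} (x : X _⦋n⦌) (A B : X.Subcomplex) :
    ofSimplex x ≤ A ⊔ B ↔ ofSimplex x ≤ A ∨ ofSimplex x ≤ B := by
  simp only [ofSimplex_le_iff, Subfunctor.max_obj, Set.mem_union]

lemma range_preimage_ι_comp (f : Y ⟶ X) (A : X.Subcomplex) :
    range ((A.preimage f).ι ≫ f) = A ⊓ range f := by
  ext n x
  simp only [Subfunctor.range_obj, Subfunctor.min_obj, Set.mem_inter_iff, Set.mem_range]
  constructor
  · rintro ⟨⟨y, hy⟩, rfl⟩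
    exact ⟨hy, y, rfl⟩
  · rintro ⟨hx, y, rfl⟩
    exact ⟨⟨y, hx⟩, rfl⟩

lemma isPushout_preimage_of_mono (f : Y ⟶ X) [Mono f] (A : X.Subcomplex) :
    IsPushout (A.fromPreimage f) (A.preimage f).ι (homOfLE le_sup_left)
      (lift f (le_sup_right : range f ≤ A ⊔ range f)) := by
  have sq : BicartSq (A ⊓ range f) A (range f) (A ⊔ range f) := ⟨rfl, rfl⟩
  refine sq.isPushout.of_iso'
    (asIso (toRange ((A.preimage f).ι ≫ f)) ≪≫ Subcomplex.eqToIso (range_preimage_ι_comp f A))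
    (Iso.refl _) (asIso (toRange f)) (Iso.refl _) ?_ ?_ ?_ ?_ <;> rfl

lemma anodyneExtensions_homOfLE_of_sup_range_eq {f : Y ⟶ X} [Mono f] {A B : X.Subcomplex}
    (h : A ≤ B) (hB : A ⊔ range f = B) (hf : anodyneExtensions (A.preimage f).ι) :
    anodyneExtensions (homOfLE h) := by
  subst hB
  exact anodyneExtensions.of_isPushout (isPushout_preimage_of_mono f A) hf

end Subcomplex

namespace stdSimplex

variable {m p : ℕ}

instance mono_map (φ : ⦋m⦌ ⟶ ⦋p⦌) [Mono φ] : Mono (SSet.stdSimplex.map φ) := by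
  have (n : SimplexCategoryᵒᵖ) : Mono ((SSet.stdSimplex.map φ).app n) := by
    rw [mono_iff_injective]
    intro x y h
    exact objEquiv.injective ((cancel_mono φ).1 (congrArg objEquiv h))
  exact NatTrans.mono_of_mono_app _

lemma _root_.SSet.face_coe_eq (S : Finset (Fin (p + 1))) : SSet.face p ↑S = face S := by
  ext ⟨n⟩ x
  induction n using SimplexCategory.rec with | _ n
  rw [mem_face_iff]
  exact Set.range_subset_iff

lemma preimage_face_map (φ : ⦋m⦌ ⟶ ⦋p⦌) (S : Finset (Fin (p + 1))) :
    (face S).preimage (SSet.stdSimplex.map φ) = face {i | φ i ∈ S} := by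
  ext ⟨n⟩ x
  induction n using SimplexCategory.rec with | _ n
  simp only [Subcomplex.preimage_obj, Set.mem_preimage, mem_face_iff, Finset.mem_filter,
    Finset.mem_univ, true_and]
  rfl

noncomputable def faceMap (S : Finset (Fin (p + 1))) (hS : S.card = m + 1) : Δ[m] ⟶ Δ[p] :=
  SSet.stdSimplex.map (SimplexCategory.mkHom (S.orderEmbOfFin hS).toOrderHom)

instance (S : Finset (Fin (p + 1))) (hS : S.card = m + 1) : Mono (faceMap S hS) := by
  have : Mono (SimplexCategory.mkHom (S.orderEmbOfFin hS).toOrderHom) := by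
    rw [SimplexCategory.mono_iff_injective]
    exact (S.orderEmbOfFin hS).injective
  unfold faceMap
  infer_instance

lemma range_faceMap (S : Finset (Fin (p + 1))) (hS : S.card = m + 1) :
    Subcomplex.range (faceMap S hS) = face S := by
  rw [face_eq_ofSimplex S m (S.orderIsoOfFin hS), Subcomplex.range_eq_ofSimplex]
  rfl

lemma preimage_face_erase_faceMap (S : Finset (Fin (p + 1))) (hS : S.card = m + 1)
    (i : Fin (m + 1)) :
    (face (S.erase (S.orderEmbOfFin hS i))).preimage (faceMap S hS) = face {i}ᶜ := by
  rw [faceMap, preimage_face_map]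
  congr 1
  ext j
  simp only [Finset.mem_filter, Finset.mem_univ, true_and, Finset.mem_erase, Finset.mem_compl,
    Finset.mem_singleton]
  change ¬S.orderEmbOfFin hS j = S.orderEmbOfFin hS i ∧ S.orderEmbOfFin hS j ∈ S ↔ ¬j = i
  simp [Finset.orderEmbOfFin_mem]

lemma preimage_faceMap_eq_horn {A : Δ[p].Subcomplex} {S : Finset (Fin (p + 1))}
    (hS : S.card = m + 2) (k : Fin (m + 2))
    (hA : ∀ i ≠ k, face (S.erase (S.orderEmbOfFin hS i)) ≤ A)
    (hk : ¬ face (S.erase (S.orderEmbOfFin hS k)) ≤ A) :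
    A.preimage (faceMap S hS) = Λ[m + 1, k] := by
  apply le_antisymm
  · rw [subcomplex_le_horn_iff]
    intro hle
    apply hk
    intro n x hx
    have hxS : x ∈ (Subcomplex.range (faceMap S hS)).obj n := by
      rw [range_faceMap]
      exact (face_le_face_iff _ _).2 (S.erase_subset _) n hx
    obtain ⟨y, rfl⟩ := hxS
    apply hle
    rwa [← preimage_face_erase_faceMap]
  · rw [horn_eq_iSup]
    refine iSup_le fun ⟨i, hi⟩ => ?_
    rw [← preimage_face_erase_faceMap S hS]
    exact fun n y hy => hA i hi n hy

lemma exists_face_eq_ofSimplex {S : Finset (Fin (p + 1))} (hS : S.Nonempty) :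
    ∃ (m : ℕ) (x : Δ[p] _⦋m⦌), face S = Subcomplex.ofSimplex x :=
  ⟨_, _, face_eq_ofSimplex S (S.card - 1)
    (S.orderIsoOfFin (Nat.succ_pred_eq_of_pos hS.card_pos).symm)⟩

lemma face_le_iSup_iff {ι : Sort*} {S : Finset (Fin (p + 1))} (hS : S.Nonempty)
    (G : ι → Δ[p].Subcomplex) : face S ≤ ⨆ i, G i ↔ ∃ i, face S ≤ G i := by
  obtain ⟨m, x, hx⟩ := exists_face_eq_ofSimplex hS
  rw [hx, Subcomplex.ofSimplex_le_iSup_iff]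

lemma face_le_sup_iff {S : Finset (Fin (p + 1))} (hS : S.Nonempty) (A B : Δ[p].Subcomplex) :
    face S ≤ A ⊔ B ↔ face S ≤ A ∨ face S ≤ B := by
  obtain ⟨m, x, hx⟩ := exists_face_eq_ofSimplex hS
  rw [hx, Subcomplex.ofSimplex_le_sup_iff]

lemma nonempty_of_not_face_le {S : Finset (Fin (p + 1))} {A : Δ[p].Subcomplex}
    (h : ¬face S ≤ A) : S.Nonempty := by
  rw [Finset.nonempty_iff_ne_empty]
  rintro rfl
  rw [face_empty] at h
  exact h bot_le

lemma anodyneExtensions_homOfLE_of_sup_face_eq {A B : Δ[p].Subcomplex}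
    {T : Finset (Fin (p + 1))} {e : Fin (p + 1)} (he : e ∈ T)
    (hA : ∀ a ∈ T, a ≠ e → face (T.erase a) ≤ A) (hT : ¬face (T.erase e) ≤ A)
    (h : A ≤ B) (hB : A ⊔ face T = B) : anodyneExtensions (Subcomplex.homOfLE h) := by
  obtain ⟨m, hm⟩ : ∃ m, T.card = m + 2 := ⟨T.card - 2, by
    have := (nonempty_of_not_face_le hT).card_pos
    rw [Finset.card_erase_of_mem he] at this
    omega⟩
  obtain ⟨k, hk⟩ : e ∈ Set.range (T.orderEmbOfFin hm) := by
    rwa [Finset.range_orderEmbOfFin]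
  refine Subcomplex.anodyneExtensions_homOfLE_of_sup_range_eq (f := faceMap T hm) h
    (by rw [range_faceMap, hB]) ?_
  rw [preimage_faceMap_eq_horn hm k
    (fun i hi => hA _ (T.orderEmbOfFin_mem hm i) (hk ▸ (T.orderEmbOfFin hm).injective.ne hi))
    (hk ▸ hT)]
  exact anodyneExtensions.horn_ι k

lemma anodyneExtensions_homOfLE_of_sup_iSup_face_eq {A B : Δ[p].Subcomplex} {e : Fin (p + 1)}
    (N : Finset (Finset (Fin (p + 1))))
    (hN : ∀ T ∈ N, e ∈ T ∧ (∀ a ∈ T, a ≠ e → face (T.erase a) ≤ A) ∧ ¬face (T.erase e) ≤ A)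
    (hanti : IsAntichain (· ⊆ ·) (N : Set (Finset (Fin (p + 1)))))
    (h : A ≤ B) (hB : A ⊔ ⨆ T ∈ N, face T = B) : anodyneExtensions (Subcomplex.homOfLE h) := by
  induction N using Finset.induction_on generalizing B with
  | empty =>
    obtain rfl : A = B := by simpa using hB
    exact anodyneExtensions.of_isIso (𝟙 _)
  | insert T N hTN ih =>
    obtain ⟨he, hA, hT⟩ := hN T (Finset.mem_insert_self T N)
    have hN' := fun T' hT' => hN T' (Finset.mem_insert_of_mem hT')
    have hT' : ¬face (T.erase e) ≤ A ⊔ ⨆ T' ∈ N, face T' := by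
      have hTe := nonempty_of_not_face_le hT
      simp only [face_le_sup_iff hTe, face_le_iSup_iff hTe, face_le_face_iff, not_or, not_exists]
      refine ⟨hT, fun T' hT' hsub => ?_⟩
      have hTT' : T ⊆ T' := by
        rw [← Finset.insert_erase he]
        exact Finset.insert_subset (hN' T' hT').1 hsub
      exact hanti (Finset.mem_insert_self T N) (Finset.mem_insert_of_mem hT')
        (fun h => hTN (h ▸ hT')) hTT'
    have h₁ : A ≤ A ⊔ ⨆ T' ∈ N, face T' := le_sup_left
    have h₂ : A ⊔ ⨆ T' ∈ N, face T' ≤ B := by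
      rw [← hB, Finset.iSup_insert]
      exact sup_le_sup_left le_sup_right _
    exact comp_mem _ _ _ (ih hN' (hanti.subset (by simp)) h₁ rfl)
      (anodyneExtensions_homOfLE_of_sup_face_eq he (fun a ha hae => (hA a ha hae).trans h₁)
        hT' h₂ (by rw [← hB, Finset.iSup_insert, sup_comm (face T), sup_assoc]))

lemma sup_iSup_face_eq_iSup_face {e : Fin (p + 1)} {F : Finset (Finset (Fin (p + 1)))} {j : ℕ}
    (h : ⨆ T ∈ ↑F ∪ {T | e ∈ T ∧ T.card = j}, face T ≤
      ⨆ T ∈ ↑F ∪ {T | e ∈ T ∧ T.card = j + 1}, face.{u} T) :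
    (⨆ T ∈ ↑F ∪ {T | e ∈ T ∧ T.card = j}, face T) ⊔
        ⨆ T ∈ ({T | e ∈ T ∧ T.card = j + 1 ∧ ∀ S ∈ F, ¬T ⊆ S} : Finset _), face T =
      ⨆ T ∈ ↑F ∪ {T | e ∈ T ∧ T.card = j + 1}, face.{u} T := by
  refine le_antisymm (sup_le h (iSup₂_le fun T hT => ?_)) (iSup₂_le fun T hT => ?_)
  · simp only [Finset.mem_filter, Finset.mem_univ, true_and] at hT
    exact le_iSup₂ (f := fun T _ => face T) T (Or.inr ⟨hT.1, hT.2.1⟩)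
  · rcases hT with hTF | ⟨heT, hcard⟩
    · exact le_sup_of_le_left (le_iSup₂ (f := fun T _ => face T) T (Or.inl hTF))
    · by_cases hsub : ∃ S ∈ F, T ⊆ S
      · obtain ⟨S, hS, hTS⟩ := hsub
        exact le_sup_of_le_left (((face_le_face_iff _ _).2 hTS).trans
          (le_iSup₂ (f := fun T _ => face T) S (Or.inl hS)))
      · simp only [not_exists, not_and] at hsub
        refine le_sup_of_le_right (le_iSup₂ (f := fun T _ => face T) T ?_)
        simpa using ⟨heT, hcard, hsub⟩

theorem anodyneExtensions_homOfLE_iSup_face {e : Fin (p + 1)} {F : Finset (Finset (Fin (p + 1)))}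
    (he : ∀ T ∈ F, e ∈ T) {j : ℕ} (hj : 1 ≤ j)
    (h : ⨆ T ∈ ↑F ∪ {T | e ∈ T ∧ T.card = j}, face T ≤
      ⨆ T ∈ ↑F ∪ {T | e ∈ T ∧ T.card = j + 1}, face.{u} T) :
    anodyneExtensions (Subcomplex.homOfLE h) := by
  refine anodyneExtensions_homOfLE_of_sup_iSup_face_eq (e := e) _ (fun T hT => ?_)
    (fun T hT T' hT' hne hsub => ?_) h (sup_iSup_face_eq_iSup_face h)
  · simp only [Finset.mem_filter, Finset.mem_univ, true_and] at hT
    obtain ⟨heT, hcard, hF⟩ := hT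
    refine ⟨heT, fun a ha hae => le_iSup₂ (f := fun T _ => face T) (T.erase a)
      (Or.inr ⟨Finset.mem_erase.2 ⟨hae.symm, heT⟩,
        by rw [Finset.card_erase_of_mem ha, hcard]; rfl⟩), fun hle => ?_⟩
    have hTe : (T.erase e).Nonempty := by
      rw [← Finset.card_pos, Finset.card_erase_of_mem heT]
      omega
    simp only [face_le_iSup_iff hTe, face_le_face_iff] at hle
    obtain ⟨S, hS, hsub⟩ := hle
    have heS : e ∈ S := hS.elim (he S) (·.1)
    have hTS : T ⊆ S := by
      rw [← Finset.insert_erase heT]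
      exact Finset.insert_subset heS hsub
    rcases hS with hS | ⟨-, hcS⟩
    · exact hF S hS hTS
    · have := Finset.card_le_card hTS
      omega
  · simp only [Finset.coe_filter, Finset.mem_univ, true_and] at hT hT'
    exact hne (Finset.eq_of_subset_of_card_le hsub (by rw [hT.2.1, hT'.2.1]))

-- `IsLUB` only involves the order, which both lattice structures share.
theorem anodyneExtensions_homOfLE_of_isLUB {e : Fin (p + 1)}
    {F : Finset (Finset (Fin (p + 1)))} (he : ∀ T ∈ F, e ∈ T) {j : ℕ} (hj : 1 ≤ j)
    {A B : Δ[p].Subcomplex}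
    (hA : IsLUB ((fun T : Finset (Fin (p + 1)) => SSet.face p ↑T) ''
      (↑F ∪ {T | e ∈ T ∧ T.card = j})) A)
    (hB : IsLUB ((fun T : Finset (Fin (p + 1)) => SSet.face p ↑T) ''
      (↑F ∪ {T | e ∈ T ∧ T.card = j + 1})) B)
    (h : A ≤ B) : anodyneExtensions (Subcomplex.homOfLE h) := by
  have hface : (fun T : Finset (Fin (p + 1)) => SSet.face p ↑T) = face :=
    funext SSet.face_coe_eq
  rw [hface] at hA hB
  obtain rfl := hA.unique isLUB_biSup
  obtain rfl := hB.unique isLUB_biSup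
  exact anodyneExtensions_homOfLE_iSup_face he hj h

end stdSimplex

end

end SSet

theorem skeleton_step_llp_general (p : ℕ) (e : Fin (p + 1)) (F : Finset (Finset (Fin (p + 1))))
    (he : ∀ T ∈ F, e ∈ T) (j : ℕ) (hj1 : 1 ≤ j)
    (hle :
      (⨆ T ∈ ↑F ∪ setOf (fun T : Finset (Fin (p + 1)) => e ∈ T ∧ T.card = j),
          SSet.face p (T : Set (Fin (p + 1)))) ≤
        ⨆ T ∈ ↑F ∪ setOf (fun T : Finset (Fin (p + 1)) => e ∈ T ∧ T.card = j + 1),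
          SSet.face p (T : Set (Fin (p + 1))))
    {X Y : SSet} (g : X ⟶ Y) (hg : IsKanFibration g) :
    HasLiftingProperty (Subpresheaf.ssetHomOfLe hle) g :=
  SSet.stdSimplex.anodyneExtensions_homOfLE_of_isLUB he hj1 isLUB_biSup isLUB_biSup hle g hg.rlp_J

/-- For `F` an inhabited finite set of faces of `Δ[p]` containing a common vertex `e`,
and `F_j = F ∪ {T : e ∈ T, |T| = j + 1}`, the inclusion
`⋃_{T ∈ F_{j-1}} Face T ⟶ ⋃_{T ∈ F_j} Face T` (for `1 ≤ j ≤ p`) has the left lifting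
property with respect to all Kan fibrations. -/
theorem skeleton_step_llp (p : ℕ) (e : Fin (p + 1)) (F : Finset (Finset (Fin (p + 1))))
    (hne : F.Nonempty) (he : ∀ T ∈ F, e ∈ T) (j : ℕ) (hj1 : 1 ≤ j) (hjp : j ≤ p)
    (hle :
      (⨆ T ∈ ↑F ∪ setOf (fun T : Finset (Fin (p + 1)) => e ∈ T ∧ T.card = j),
          SSet.face p (T : Set (Fin (p + 1)))) ≤
        ⨆ T ∈ ↑F ∪ setOf (fun T : Finset (Fin (p + 1)) => e ∈ T ∧ T.card = j + 1),
          SSet.face p (T : Set (Fin (p + 1))))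
    {X Y : SSet} (g : X ⟶ Y) (hg : IsKanFibration g) :
    HasLiftingProperty (Subpresheaf.ssetHomOfLe hle) g :=
  skeleton_step_llp_general p e F he j hj1 hle g hg
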